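/- Let W = {(W_i, ω_i)}_{i∈I} be a fusion Riesz basis for H with |I| ≥ 2. Then for every pair of distinct indices ℓ, k ∈ I, the two-element family {(W_ℓ⊥, ω_ℓ), (W_k⊥, ω_k)} is a fusion frame for H. -/

import Mathlib

/-! For `u ∈ W ℓ` and `v ∈ W k`, the lower Riesz bound applied to `u / ω ℓ` and `-v / ω k` gives
`c ‖u‖² ≤ ‖u - v‖²` with `c = C / ω ℓ²`. With `u = P_{W ℓ} x`, `v = P_{W k} x` and
`P_{W ℓ} x - P_{W k} x = P_{(W k)ᗮ} x - P_{(W ℓ)ᗮ} x`, this bounds `‖P_{W ℓ} x‖²` by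
`(2 / c) (‖P_{(W ℓ)ᗮ} x‖² + ‖P_{(W k)ᗮ} x‖²)`, and Pythagoras
`‖x‖² = ‖P_{W ℓ} x‖² + ‖P_{(W ℓ)ᗮ} x‖²` gives the lower frame bound. The upper bound holds
because orthogonal projections are contractions. -/

noncomputable section
open scoped ENNReal

/-- `W = {(W i, ω i)}` is a fusion frame for `H`. -/
def IsFusionFrame {H : Type} [NormedAddCommGroup H] [InnerProductSpace ℂ H]
    {ι : Type} (W : ι → Submodule ℂ H) [∀ i, Submodule.HasOrthogonalProjection (W i)]
    (ω : ι → ℝ) : Prop :=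
  (∀ i, 0 < ω i) ∧ ∃ A B : ℝ, 0 < A ∧ A ≤ B ∧ ∀ f : H,
    (A * ‖f‖ ^ 2 ≤ ∑' i, ω i ^ 2 * ‖(Submodule.orthogonalProjectionOnto (W i) f : H)‖ ^ 2) ∧
    (∑' i, ω i ^ 2 * ‖(Submodule.orthogonalProjectionOnto (W i) f : H)‖ ^ 2 ≤ B * ‖f‖ ^ 2)

/-- `W = {(W i, ω i)}` is a fusion Riesz basis for `H`. -/
def IsFusionRieszBasis {H : Type} [NormedAddCommGroup H] [InnerProductSpace ℂ H]
    {ι : Type} (W : ι → Submodule ℂ H) (ω : ι → ℝ) : Prop :=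
  (∀ i, 0 < ω i) ∧ (⨆ i, W i).topologicalClosure = ⊤ ∧
  ∃ C D : ℝ, 0 < C ∧ C ≤ D ∧ ∀ (s : Finset ι) (f : ∀ i, W i),
    (C * ∑ j ∈ s, ‖(f j : H)‖ ^ 2 ≤ ‖∑ j ∈ s, ω j • (f j : H)‖ ^ 2) ∧
    (‖∑ j ∈ s, ω j • (f j : H)‖ ^ 2 ≤ D * ∑ j ∈ s, ‖(f j : H)‖ ^ 2)

open Submodule

section Geometry

variable {𝕜 E : Type*} [RCLike 𝕜] [NormedAddCommGroup E] [InnerProductSpace 𝕜 E]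

theorem Submodule.starProjection_sub_starProjection_eq_orthogonal_sub (K L : Submodule 𝕜 E)
    [K.HasOrthogonalProjection] [L.HasOrthogonalProjection] (x : E) :
    K.starProjection x - L.starProjection x = Lᗮ.starProjection x - Kᗮ.starProjection x := by
  simp only [starProjection_orthogonal_val]
  abel

theorem mul_norm_sq_le_norm_sq_orthogonalProjectionOnto_orthogonal_add
    {K L : Submodule 𝕜 E} [K.HasOrthogonalProjection] [L.HasOrthogonalProjection]
    {c : ℝ} (hc : 0 < c) (hKL : ∀ u ∈ K, ∀ v ∈ L, c * ‖u‖ ^ 2 ≤ ‖u - v‖ ^ 2) (x : E) :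
    c / (c + 2) * ‖x‖ ^ 2 ≤
      ‖(Kᗮ.orthogonalProjectionOnto x : E)‖ ^ 2 + ‖(Lᗮ.orthogonalProjectionOnto x : E)‖ ^ 2 := by
  have hK : c * ‖K.starProjection x‖ ^ 2 ≤
      2 * (‖Lᗮ.starProjection x‖ ^ 2 + ‖Kᗮ.starProjection x‖ ^ 2) := by
    calc c * ‖K.starProjection x‖ ^ 2
        ≤ ‖K.starProjection x - L.starProjection x‖ ^ 2 :=
          hKL _ (K.starProjection_apply_mem x) _ (L.starProjection_apply_mem x)
      _ = ‖Lᗮ.starProjection x - Kᗮ.starProjection x‖ ^ 2 := by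
          rw [K.starProjection_sub_starProjection_eq_orthogonal_sub L]
      _ ≤ (‖Lᗮ.starProjection x‖ + ‖Kᗮ.starProjection x‖) ^ 2 :=
          pow_le_pow_left₀ (norm_nonneg _) (norm_sub_le _ _) 2
      _ ≤ _ := add_sq_le
  have hx := norm_sq_eq_add_norm_sq_projection x K
  simp only [coe_norm, ← starProjection_apply] at hx ⊢
  rw [div_mul_eq_mul_div, div_le_iff₀ (by positivity)]
  nlinarith [sq_nonneg ‖Lᗮ.starProjection x‖]

end Geometry

theorem IsFusionRieszBasis.exists_pos_mul_norm_sq_le_norm_sub_sq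
    {H : Type} [NormedAddCommGroup H] [InnerProductSpace ℂ H]
    {ι : Type} {W : ι → Submodule ℂ H} {ω : ι → ℝ} (hW : IsFusionRieszBasis W ω)
    {l k : ι} (hlk : l ≠ k) :
    ∃ c > 0, ∀ u ∈ W l, ∀ v ∈ W k, c * ‖u‖ ^ 2 ≤ ‖u - v‖ ^ 2 := by
  classical
  obtain ⟨hω, -, C, _, hC, -, hR⟩ := hW
  refine ⟨C / ω l ^ 2, div_pos hC (pow_pos (hω l) 2), fun u hu v hv => ?_⟩
  let f : ∀ i, W i :=
    Pi.single l ⟨(ω l)⁻¹ • u, (W l).smul_mem _ hu⟩ +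
      Pi.single k ⟨-(ω k)⁻¹ • v, (W k).smul_mem _ hv⟩
  have hsum : ∑ j ∈ {l, k}, ω j • (f j : H) = u - v := by
    simp [f, Finset.sum_pair hlk, hlk, hlk.symm, smul_smul, (hω l).ne', (hω k).ne',
      sub_eq_add_neg]
  have hnorm : ∑ j ∈ {l, k}, ‖(f j : H)‖ ^ 2 = ‖u‖ ^ 2 / ω l ^ 2 + ‖v‖ ^ 2 / ω k ^ 2 := by
    simp [f, Finset.sum_pair hlk, hlk, hlk.symm, norm_smul, abs_of_pos (hω l),
      abs_of_pos (hω k), mul_pow, div_eq_inv_mul]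
  have hlow := (hR {l, k} f).1
  rw [hsum, hnorm] at hlow
  calc C / ω l ^ 2 * ‖u‖ ^ 2 ≤ C * (‖u‖ ^ 2 / ω l ^ 2 + ‖v‖ ^ 2 / ω k ^ 2) := by
        rw [div_mul_eq_mul_div, mul_div_assoc]
        exact mul_le_mul_of_nonneg_left (le_add_of_nonneg_right (by positivity)) hC.le
    _ ≤ ‖u - v‖ ^ 2 := hlow

theorem two_orthogonalComplements_fusionFrame_general
    {H : Type} [NormedAddCommGroup H] [InnerProductSpace ℂ H]
    {ι : Type} (W : ι → Submodule ℂ H) [∀ i, CompleteSpace (W i)] (ω : ι → ℝ)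
    (hW : IsFusionRieszBasis W ω)
    (l k : ι) (hlk : l ≠ k) :
    ∃ A B : ℝ, 0 < A ∧ A ≤ B ∧ ∀ f : H,
      (A * ‖f‖ ^ 2 ≤
        ω l ^ 2 * ‖(Submodule.orthogonalProjectionOnto (W l)ᗮ f : H)‖ ^ 2 +
          ω k ^ 2 * ‖(Submodule.orthogonalProjectionOnto (W k)ᗮ f : H)‖ ^ 2) ∧
      (ω l ^ 2 * ‖(Submodule.orthogonalProjectionOnto (W l)ᗮ f : H)‖ ^ 2 +
          ω k ^ 2 * ‖(Submodule.orthogonalProjectionOnto (W k)ᗮ f : H)‖ ^ 2 ≤ B * ‖f‖ ^ 2) := by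
  obtain ⟨c, hc, hWlk⟩ := hW.exists_pos_mul_norm_sq_le_norm_sub_sq hlk
  set m := min (ω l ^ 2) (ω k ^ 2)
  have hm : 0 < m := lt_min (pow_pos (hW.1 l) 2) (pow_pos (hW.1 k) 2)
  have hc' : c / (c + 2) ≤ 1 := (div_le_one (by positivity)).2 (by linarith)
  refine ⟨m * (c / (c + 2)), ω l ^ 2 + ω k ^ 2, by positivity, ?_, fun x => ⟨?_, ?_⟩⟩
  · calc m * (c / (c + 2)) ≤ m := mul_le_of_le_one_right hm.le hc'
      _ ≤ ω l ^ 2 := min_le_left _ _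
      _ ≤ ω l ^ 2 + ω k ^ 2 := le_add_of_nonneg_right (sq_nonneg _)
  · have hx := mul_norm_sq_le_norm_sq_orthogonalProjectionOnto_orthogonal_add hc hWlk x
    calc m * (c / (c + 2)) * ‖x‖ ^ 2
        ≤ m * (‖((W l)ᗮ.orthogonalProjectionOnto x : H)‖ ^ 2 +
            ‖((W k)ᗮ.orthogonalProjectionOnto x : H)‖ ^ 2) := by
          rw [mul_assoc]; gcongr
      _ = m * ‖((W l)ᗮ.orthogonalProjectionOnto x : H)‖ ^ 2 +
            m * ‖((W k)ᗮ.orthogonalProjectionOnto x : H)‖ ^ 2 := mul_add _ _ _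
      _ ≤ _ := by gcongr; exacts [min_le_left _ _, min_le_right _ _]
  · calc ω l ^ 2 * ‖((W l)ᗮ.orthogonalProjectionOnto x : H)‖ ^ 2 +
          ω k ^ 2 * ‖((W k)ᗮ.orthogonalProjectionOnto x : H)‖ ^ 2
        ≤ ω l ^ 2 * ‖x‖ ^ 2 + ω k ^ 2 * ‖x‖ ^ 2 := by
          gcongr <;> exact norm_starProjection_apply_le _ x
      _ = (ω l ^ 2 + ω k ^ 2) * ‖x‖ ^ 2 := by ring

/-- if `W` is a fusion Riesz basis with `|I| ≥ 2`, then for all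
distinct `ℓ, k` the family `{(W ℓᗮ, ω ℓ), (W kᗮ, ω k)}` is a fusion frame. -/
theorem two_orthogonalComplements_fusionFrame
    {H : Type} [NormedAddCommGroup H] [InnerProductSpace ℂ H] [CompleteSpace H]
    {ι : Type} (W : ι → Submodule ℂ H) [∀ i, CompleteSpace (W i)] (ω : ι → ℝ)
    (hW : IsFusionRieszBasis W ω)
    (l k : ι) (hlk : l ≠ k) :
    ∃ A B : ℝ, 0 < A ∧ A ≤ B ∧ ∀ f : H,
      (A * ‖f‖ ^ 2 ≤
        ω l ^ 2 * ‖(Submodule.orthogonalProjectionOnto (W l)ᗮ f : H)‖ ^ 2 +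
          ω k ^ 2 * ‖(Submodule.orthogonalProjectionOnto (W k)ᗮ f : H)‖ ^ 2) ∧
      (ω l ^ 2 * ‖(Submodule.orthogonalProjectionOnto (W l)ᗮ f : H)‖ ^ 2 +
          ω k ^ 2 * ‖(Submodule.orthogonalProjectionOnto (W k)ᗮ f : H)‖ ^ 2 ≤ B * ‖f‖ ^ 2) :=
  two_orthogonalComplements_fusionFrame_general W ω hW l k hlk
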